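/- Let A be the commutative F2-algebra F2[ξ_1, ξ_2, …, τ_0, τ_1, …]/(τ_i² : i ≥ 0), the polynomial algebra on countably many generators ξ_1, ξ_2, … and τ_0, τ_1, … modulo the squares of all the τ_i. Then: (1) there is a unique F2-algebra homomorphism Δ : A → A ⊗_{F2} A with Δ(ξ_n) = Σ_{i=0}^{n} ξ_{n−i}^{2^i} ⊗ ξ_i and Δ(τ_n) = τ_n ⊗ 1 + Σ_{i=0}^{n} ξ_{n−i}^{2^i} ⊗ τ_i (with the convention ξ_0 = 1), and a unique F2-algebra homomorphism ε : A → F2 sending every ξ_n and every τ_n to 0; (2) Δ is coassociative and ε is a counit for Δ, making (A, Δ, ε) a commutative bialgebra over F2; (3) this bialgebra admits an antipode, i.e. A is a Hopf algebra over F2. (This is the Hopf algebra structure of the Cτ-linear dual Steenrod algebra Â_{*,*} of Proposition 2.4.) -/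

import Mathlib

/-!
STATEMENT 6: Let `A = F2[ξ_1, ξ_2, …, τ_0, τ_1, …]/(τ_i²)`.  There is a unique
`F2`-algebra map `Δ : A → A ⊗ A` with `Δ(ξ_n) = Σ_{i=0}^{n} ξ_{n−i}^{2^i} ⊗ ξ_i` and
`Δ(τ_n) = τ_n ⊗ 1 + Σ_{i=0}^{n} ξ_{n−i}^{2^i} ⊗ τ_i` (convention `ξ_0 = 1`), and a
unique `F2`-algebra map `ε : A → F2` killing all generators; `Δ` is coassociative with
counit `ε`, making `A` a commutative bialgebra, and this bialgebra admits an
antipode, i.e. `A` is a Hopf algebra over `F2`.  (The Cτ-linear dual Steenrod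
algebra `Â_{*,*}` of Proposition 2.4.)
-/

open scoped TensorProduct

set_option synthInstance.maxHeartbeats 1000000
set_option maxHeartbeats 1600000

/-- The Cτ-linear dual Steenrod algebra
`A = F2[ξ_1, ξ_2, …, τ_0, τ_1, …]/(τ_i² : i ≥ 0)`; the variables `Sum.inl n`
are the `ξ_{n+1}` and the variables `Sum.inr i` are the `τ_i`. -/
abbrev MotDualSt : Type :=
  MvPolynomial (ℕ ⊕ ℕ) (ZMod 2) ⧸
    Ideal.span (Set.range fun i : ℕ =>
      (MvPolynomial.X (Sum.inr i) : MvPolynomial (ℕ ⊕ ℕ) (ZMod 2)) ^ 2)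

/-- The generators `ξ_n` of `A`, with the convention `ξ_0 = 1`. -/
noncomputable def xiA : ℕ → MotDualSt
  | 0 => 1
  | n + 1 => Ideal.Quotient.mk _ (MvPolynomial.X (Sum.inl n))

/-- The generators `τ_n` of `A`; they satisfy `τ_n² = 0`. -/
noncomputable def tauA (n : ℕ) : MotDualSt :=
  Ideal.Quotient.mk _ (MvPolynomial.X (Sum.inr n))

/-- `D` is the motivic Milnor comultiplication:
`D(ξ_n) = Σ_{i=0}^{n} ξ_{n−i}^{2^i} ⊗ ξ_i` for `n ≥ 1` and
`D(τ_n) = τ_n ⊗ 1 + Σ_{i=0}^{n} ξ_{n−i}^{2^i} ⊗ τ_i`. -/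
def IsComulA (D : MotDualSt →ₐ[ZMod 2] MotDualSt ⊗[ZMod 2] MotDualSt) : Prop :=
  (∀ n : ℕ, D (xiA (n + 1)) =
      ∑ i ∈ Finset.range (n + 2), ((xiA (n + 1 - i)) ^ (2 ^ i)) ⊗ₜ[ZMod 2] (xiA i)) ∧
  (∀ n : ℕ, D (tauA n) =
      (tauA n) ⊗ₜ[ZMod 2] (1 : MotDualSt) +
        ∑ i ∈ Finset.range (n + 1), ((xiA (n - i)) ^ (2 ^ i)) ⊗ₜ[ZMod 2] (tauA i))

/-- `e` is the counit: it kills every `ξ_n` (`n ≥ 1`) and every `τ_n`. -/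
def IsCounitA (e : MotDualSt →ₐ[ZMod 2] ZMod 2) : Prop :=
  (∀ n : ℕ, e (xiA (n + 1)) = 0) ∧ (∀ n : ℕ, e (tauA n) = 0)

/-!
Identify `a : ℕ → R` with the additive power series `∑ aₙ x^{2ⁿ}`. Over an `𝔽₂`-algebra these
form a monoid under composition (`seriesComp`; associative because Frobenius is additive) with
unit `x`, i.e. `Pi.single 0 1`, in which every `a` with `a 0 = 1` is invertible. Milnor's
formulas read `Δ ξ = seriesComp (ξ ⊗ 1) (1 ⊗ ξ)` and `Δ τ = τ ⊗ 1 + seriesComp (ξ ⊗ 1) (1 ⊗ τ)`,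
so coassociativity is associativity of composition, the counit sends `ξ` to the unit, and the
antipode sends `ξ` to its inverse `c` and `τ` to `seriesComp c τ`. As `A` is presented by the
generators `ξᵢ, τᵢ` and the relations `τᵢ² = 0`, all maps are defined, and all identities
checked, on generators.
-/

open Finset
open scoped TensorProduct

lemma sum_pow_char_pow_of_zmod_algebra {R ι : Type*} [CommSemiring R] {p : ℕ} [Fact p.Prime]
    [Algebra (ZMod p) R] (s : Finset ι) (f : ι → R) (n : ℕ) :
    (∑ i ∈ s, f i) ^ p ^ n = ∑ i ∈ s, f i ^ p ^ n := by
  nontriviality R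
  have := charP_of_injective_algebraMap' (ZMod p) (A := R) p
  exact sum_pow_char_pow p n s f

lemma two_eq_zero_of_zmod_algebra {R : Type*} [Semiring R] [Algebra (ZMod 2) R] :
    (2 : R) = 0 := by
  rw [← map_ofNat (algebraMap (ZMod 2) R) 2, show (OfNat.ofNat 2 : ZMod 2) = 0 from rfl, map_zero]

lemma algebraMap_single_zero_one {R B : Type*} [CommSemiring R] [Semiring B] [Algebra R B] :
    (fun i => algebraMap R B ((Pi.single 0 1 : ℕ → R) i)) = Pi.single 0 1 := by
  funext i
  rcases eq_or_ne i 0 with rfl | hi <;> simp [*]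

lemma Algebra.TensorProduct.productMap_toLinearMap {R A B C : Type*} [CommSemiring R]
    [Semiring A] [Semiring B] [CommSemiring C] [Algebra R A] [Algebra R B] [Algebra R C]
    (f : A →ₐ[R] C) (g : B →ₐ[R] C) :
    (productMap f g).toLinearMap =
      LinearMap.mul' R C ∘ₗ _root_.TensorProduct.map f.toLinearMap g.toLinearMap :=
  _root_.TensorProduct.ext' fun _ _ => rfl

section SeriesComp

variable {R : Type*} [CommSemiring R] (p : ℕ)

/-- The coefficients of the composite `b(a(x))` of the additive power series
`a(x) = ∑ aₙ x^{pⁿ}` and `b(x) = ∑ bₙ x^{pⁿ}`, in characteristic `p`. -/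
def seriesComp (a b : ℕ → R) (n : ℕ) : R :=
  ∑ i ∈ range (n + 1), a (n - i) ^ p ^ i * b i

variable {p}

lemma seriesComp_single_left [NeZero p] (b : ℕ → R) : seriesComp p (Pi.single 0 1) b = b := by
  funext n
  rw [seriesComp, sum_eq_single_of_mem n (self_mem_range_succ n)]
  · simp
  · intro i hi hin
    have : n - i ≠ 0 := by grind
    simp [this, NeZero.ne]

lemma seriesComp_single_right (a : ℕ → R) : seriesComp p a (Pi.single 0 1) = a := by
  funext n
  rw [seriesComp, sum_eq_single_of_mem 0 (by simp)]
  · simp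
  · intro i _ hi
    simp [hi]

lemma seriesComp_add_right (a b c : ℕ → R) :
    seriesComp p a (b + c) = seriesComp p a b + seriesComp p a c := by
  funext n
  simp [seriesComp, mul_add, sum_add_distrib]

@[simp]
lemma seriesComp_zero_right (a : ℕ → R) : seriesComp p a (fun _ => 0) = 0 := by
  funext n
  simp [seriesComp]

lemma map_seriesComp {S F : Type*} [CommSemiring S] [FunLike F R S] [RingHomClass F R S] (f : F)
    (a b : ℕ → R) (n : ℕ) : f (seriesComp p a b n) = seriesComp p (f ∘ a) (f ∘ b) n := by
  simp [seriesComp, map_sum]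

lemma seriesComp_tmul {K A B : Type*} [CommSemiring K] [CommSemiring A] [CommSemiring B]
    [Algebra K A] [Algebra K B] (a : ℕ → A) (b : ℕ → B) (n : ℕ) :
    seriesComp p (fun i => a i ⊗ₜ[K] (1 : B)) (fun i => (1 : A) ⊗ₜ[K] b i) n =
      ∑ i ∈ range (n + 1), (a (n - i) ^ p ^ i) ⊗ₜ[K] b i := by
  simp [seriesComp, Algebra.TensorProduct.tmul_pow]

variable [Fact p.Prime] [Algebra (ZMod p) R]

lemma seriesComp_assoc (a b c : ℕ → R) :
    seriesComp p (seriesComp p a b) c = seriesComp p a (seriesComp p b c) := by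
  funext n
  have frobenius_expand : ∀ i ≤ n, seriesComp p a b (n - i) ^ p ^ i * c i =
      ∑ j ∈ range (n + 1 - i), a (n - i - j) ^ p ^ (j + i) * b j ^ p ^ i * c i := by
    intro i hi
    rw [seriesComp, sum_pow_char_pow_of_zmod_algebra, sum_mul,
      show n - i + 1 = n + 1 - i by omega]
    refine sum_congr rfl fun j _ => ?_
    rw [mul_pow, ← pow_mul, ← pow_add]
  rw [seriesComp, sum_congr rfl fun i hi => frobenius_expand i (by grind), ← sum_range_diag_flip]
  refine sum_congr rfl fun k hk => ?_
  rw [seriesComp, mul_sum]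
  refine sum_congr rfl fun i hi => ?_
  rw [show k - i + i = k by grind, show n - i - (k - i) = n - k by grind, mul_assoc]

lemma seriesComp_pow_eq_zero {a b : ℕ → R} (hb : ∀ i, b i ^ p = 0) (n : ℕ) :
    seriesComp p a b n ^ p = 0 := by
  rw [seriesComp, ← pow_one p, sum_pow_char_pow_of_zmod_algebra]
  exact sum_eq_zero fun i _ => by rw [pow_one, mul_pow, hb, mul_zero]

end SeriesComp

section SeriesInv

variable {R : Type*} [CommRing R] (p : ℕ)

def seriesInv (a : ℕ → R) : ℕ → R
  | 0 => 1
  | n + 1 => -∑ i ∈ range (n + 1), seriesInv a (n - i) ^ p ^ (i + 1) * a (i + 1)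
decreasing_by omega

variable {p}

@[simp]
lemma seriesInv_zero (a : ℕ → R) : seriesInv p a 0 = 1 := by
  rw [seriesInv]

lemma seriesComp_seriesInv_left {a : ℕ → R} (ha : a 0 = 1) :
    seriesComp p (seriesInv p a) a = Pi.single 0 1 := by
  funext n
  cases n with
  | zero => simp [seriesComp, ha]
  | succ n =>
    rw [seriesComp, sum_range_succ', ha]
    conv_lhs => arg 2; rw [Nat.sub_zero, pow_zero, pow_one, mul_one, seriesInv]
    simp

lemma seriesComp_seriesInv_right [Fact p.Prime] [Algebra (ZMod p) R] {a : ℕ → R}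
    (ha : a 0 = 1) : seriesComp p a (seriesInv p a) = Pi.single 0 1 := by
  set c := seriesInv p a
  have hc : seriesComp p c a = Pi.single 0 1 := seriesComp_seriesInv_left ha
  have hd : seriesComp p (seriesInv p c) c = Pi.single 0 1 :=
    seriesComp_seriesInv_left (seriesInv_zero a)
  have had : a = seriesInv p c := calc
    a = seriesComp p (seriesComp p (seriesInv p c) c) a := by rw [hd, seriesComp_single_left]
    _ = seriesInv p c := by rw [seriesComp_assoc, hc, seriesComp_single_right]
  rw [had, hd]

end SeriesInv

section Milnor

open Algebra.TensorProduct

variable {A : Type*} [CommRing A] [Algebra (ZMod 2) A]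

def IsMilnorComul (ξ τ : ℕ → A) (D : A →ₐ[ZMod 2] A ⊗[ZMod 2] A) : Prop :=
  (∀ n, D (ξ n) = seriesComp 2 (fun i => ξ i ⊗ₜ 1) (fun i => 1 ⊗ₜ ξ i) n) ∧
  ∀ n, D (τ n) = τ n ⊗ₜ 1 + seriesComp 2 (fun i => ξ i ⊗ₜ 1) (fun i => 1 ⊗ₜ τ i) n

lemma milnorComul_tau_sq {ξ τ : ℕ → A} (hτ : ∀ i, τ i ^ 2 = 0) (n : ℕ) :
    (τ n ⊗ₜ[ZMod 2] (1 : A) +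
      seriesComp 2 (fun i => ξ i ⊗ₜ[ZMod 2] (1 : A)) (fun i => (1 : A) ⊗ₜ τ i) n) ^ 2 = 0 := by
  rw [add_sq, seriesComp_pow_eq_zero fun i => by rw [tmul_pow, hτ, TensorProduct.tmul_zero],
    tmul_pow, hτ, TensorProduct.zero_tmul, two_eq_zero_of_zmod_algebra (R := A ⊗[ZMod 2] A)]
  simp

namespace IsMilnorComul

variable {ξ τ : ℕ → A} {D : A →ₐ[ZMod 2] A ⊗[ZMod 2] A} (hD : IsMilnorComul ξ τ D)
include hD

section Map

variable {C : Type*} [CommRing C] [Algebra (ZMod 2) C] (Φ : A ⊗[ZMod 2] A →ₐ[ZMod 2] C)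

lemma map_apply_xi (n : ℕ) :
    Φ (D (ξ n)) = seriesComp 2 (fun i => Φ (ξ i ⊗ₜ 1)) (fun i => Φ (1 ⊗ₜ ξ i)) n := by
  rw [hD.1, map_seriesComp]
  rfl

lemma map_apply_tau (n : ℕ) :
    Φ (D (τ n)) = Φ (τ n ⊗ₜ 1) +
      seriesComp 2 (fun i => Φ (ξ i ⊗ₜ 1)) (fun i => Φ (1 ⊗ₜ τ i)) n := by
  rw [hD.2, map_add, map_seriesComp]
  rfl

end Map

section Coassoc

local notation "α" =>
  AlgEquiv.toAlgHom (Algebra.TensorProduct.assoc (ZMod 2) (ZMod 2) (ZMod 2) A A A)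

lemma assoc_map_apply_xi_tmul_one :
    (fun i => (α).comp (map D (AlgHom.id (ZMod 2) A)) (ξ i ⊗ₜ 1)) =
      seriesComp 2 (fun i => ξ i ⊗ₜ[ZMod 2] ((1 : A) ⊗ₜ[ZMod 2] (1 : A)))
        (fun i => 1 ⊗ₜ[ZMod 2] (ξ i ⊗ₜ[ZMod 2] (1 : A))) := by
  funext i
  simpa using hD.map_apply_xi ((α).comp includeLeft) i

lemma map_apply_one_tmul_xi :
    (fun i => map (AlgHom.id (ZMod 2) A) D (1 ⊗ₜ ξ i)) =
      seriesComp 2 (fun i => (1 : A) ⊗ₜ[ZMod 2] (ξ i ⊗ₜ[ZMod 2] (1 : A)))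
        (fun i => (1 : A) ⊗ₜ[ZMod 2] ((1 : A) ⊗ₜ[ZMod 2] ξ i)) := by
  funext i
  simpa using hD.map_apply_xi (includeRight (R := ZMod 2) (A := A)) i

lemma map_apply_one_tmul_tau :
    (fun i => map (AlgHom.id (ZMod 2) A) D (1 ⊗ₜ τ i)) =
      (fun i => (1 : A) ⊗ₜ[ZMod 2] (τ i ⊗ₜ[ZMod 2] (1 : A))) +
        seriesComp 2 (fun i => (1 : A) ⊗ₜ[ZMod 2] (ξ i ⊗ₜ[ZMod 2] (1 : A)))
          (fun i => (1 : A) ⊗ₜ[ZMod 2] ((1 : A) ⊗ₜ[ZMod 2] τ i)) := by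
  funext i
  simpa using hD.map_apply_tau (includeRight (R := ZMod 2) (A := A)) i

lemma coassoc_apply_xi (n : ℕ) :
    (α).comp ((map D (AlgHom.id (ZMod 2) A)).comp D) (ξ n) =
      (map (AlgHom.id (ZMod 2) A) D).comp D (ξ n) := by
  rw [← AlgHom.comp_assoc, AlgHom.comp_apply, AlgHom.comp_apply (map _ D), hD.map_apply_xi,
    hD.map_apply_xi, hD.assoc_map_apply_xi_tmul_one, hD.map_apply_one_tmul_xi, seriesComp_assoc]
  simp [Algebra.TensorProduct.one_def]

lemma coassoc_apply_tau (n : ℕ) :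
    (α).comp ((map D (AlgHom.id (ZMod 2) A)).comp D) (τ n) =
      (map (AlgHom.id (ZMod 2) A) D).comp D (τ n) := by
  rw [← AlgHom.comp_assoc, AlgHom.comp_apply, AlgHom.comp_apply (map _ D), hD.map_apply_tau,
    hD.map_apply_tau, hD.assoc_map_apply_xi_tmul_one, hD.map_apply_one_tmul_tau,
    seriesComp_add_right, ← seriesComp_assoc]
  have hτ := hD.map_apply_tau ((α).comp includeLeft) n
  simp only [AlgHom.comp_apply, includeLeft_apply] at hτ ⊢
  simp [hτ, Algebra.TensorProduct.one_def, add_assoc]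

end Coassoc

section Counit

variable {e : A →ₐ[ZMod 2] ZMod 2}

lemma lid_apply_xi (heξ : ∀ n, e (ξ n) = (Pi.single 0 1 : ℕ → ZMod 2) n) (n : ℕ) :
    (Algebra.TensorProduct.lid (ZMod 2) A).toAlgHom.comp
        ((map e (AlgHom.id (ZMod 2) A)).comp D) (ξ n) = ξ n := by
  rw [← AlgHom.comp_assoc, AlgHom.comp_apply, hD.map_apply_xi]
  simp [heξ, ← Algebra.algebraMap_eq_smul_one, algebraMap_single_zero_one,
    seriesComp_single_left]

lemma lid_apply_tau (heξ : ∀ n, e (ξ n) = (Pi.single 0 1 : ℕ → ZMod 2) n)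
    (heτ : ∀ n, e (τ n) = 0) (n : ℕ) :
    (Algebra.TensorProduct.lid (ZMod 2) A).toAlgHom.comp
        ((map e (AlgHom.id (ZMod 2) A)).comp D) (τ n) = τ n := by
  rw [← AlgHom.comp_assoc, AlgHom.comp_apply, hD.map_apply_tau]
  simp [heξ, heτ, ← Algebra.algebraMap_eq_smul_one, algebraMap_single_zero_one,
    seriesComp_single_left]

lemma rid_apply_xi (heξ : ∀ n, e (ξ n) = (Pi.single 0 1 : ℕ → ZMod 2) n) (n : ℕ) :
    (Algebra.TensorProduct.rid (ZMod 2) (ZMod 2) A).toAlgHom.comp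
        ((map (AlgHom.id (ZMod 2) A) e).comp D) (ξ n) = ξ n := by
  rw [← AlgHom.comp_assoc, AlgHom.comp_apply, hD.map_apply_xi]
  simp [heξ, ← Algebra.algebraMap_eq_smul_one, algebraMap_single_zero_one,
    seriesComp_single_right]

lemma rid_apply_tau (heτ : ∀ n, e (τ n) = 0) (n : ℕ) :
    (Algebra.TensorProduct.rid (ZMod 2) (ZMod 2) A).toAlgHom.comp
        ((map (AlgHom.id (ZMod 2) A) e).comp D) (τ n) = τ n := by
  rw [← AlgHom.comp_assoc, AlgHom.comp_apply, hD.map_apply_tau]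
  simp [heτ]

end Counit

section Antipode

variable {S : A →ₐ[ZMod 2] A}

lemma productMap_left_apply_xi (hξ0 : ξ 0 = 1) (hSξ : ∀ n, S (ξ n) = seriesInv 2 ξ n) (n : ℕ) :
    productMap S (AlgHom.id (ZMod 2) A) (D (ξ n)) = (Pi.single 0 1 : ℕ → A) n := by
  rw [hD.map_apply_xi]
  simp [hSξ, seriesComp_seriesInv_left hξ0]

lemma productMap_left_apply_tau (hSξ : ∀ n, S (ξ n) = seriesInv 2 ξ n)
    (hSτ : ∀ n, S (τ n) = seriesComp 2 (seriesInv 2 ξ) τ n) (n : ℕ) :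
    productMap S (AlgHom.id (ZMod 2) A) (D (τ n)) = 0 := by
  rw [hD.map_apply_tau]
  simp only [productMap_apply_tmul, map_one, mul_one, one_mul, AlgHom.id_apply, hSξ, hSτ]
  rw [← two_mul, two_eq_zero_of_zmod_algebra, zero_mul]

lemma productMap_right_apply_xi (hξ0 : ξ 0 = 1) (hSξ : ∀ n, S (ξ n) = seriesInv 2 ξ n)
    (n : ℕ) : productMap (AlgHom.id (ZMod 2) A) S (D (ξ n)) = (Pi.single 0 1 : ℕ → A) n := by
  rw [hD.map_apply_xi]
  simp [hSξ, seriesComp_seriesInv_right hξ0]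

lemma productMap_right_apply_tau (hξ0 : ξ 0 = 1)
    (hSτ : ∀ n, S (τ n) = seriesComp 2 (seriesInv 2 ξ) τ n) (n : ℕ) :
    productMap (AlgHom.id (ZMod 2) A) S (D (τ n)) = 0 := by
  rw [hD.map_apply_tau]
  simp only [productMap_apply_tmul, map_one, mul_one, one_mul, AlgHom.id_apply, hSτ]
  rw [← seriesComp_assoc, seriesComp_seriesInv_right hξ0, seriesComp_single_left, ← two_mul,
    two_eq_zero_of_zmod_algebra, zero_mul]

end Antipode

end IsMilnorComul

end Milnor

namespace MotDualSt

open MvPolynomial Algebra.TensorProduct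

lemma tauA_sq (n : ℕ) : tauA n ^ 2 = 0 :=
  Ideal.Quotient.eq_zero_iff_mem.2 (Ideal.subset_span ⟨n, rfl⟩)

lemma algHom_ext {B : Type*} [Semiring B] [Algebra (ZMod 2) B] {f g : MotDualSt →ₐ[ZMod 2] B}
    (hxi : ∀ n, f (xiA (n + 1)) = g (xiA (n + 1))) (htau : ∀ n, f (tauA n) = g (tauA n)) :
    f = g := by
  refine Ideal.Quotient.algHom_ext _ (MvPolynomial.algHom_ext ?_)
  rintro (n | n)
  exacts [hxi n, htau n]

variable {B : Type*} [CommRing B] [Algebra (ZMod 2) B]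

noncomputable def lift (x t : ℕ → B) (ht : ∀ i, t i ^ 2 = 0) : MotDualSt →ₐ[ZMod 2] B :=
  Ideal.Quotient.liftₐ _ (aeval (Sum.elim (fun n => x (n + 1)) t)) fun _ ha => by
    refine (Ideal.span_le (I := RingHom.ker (aeval (Sum.elim (fun n => x (n + 1)) t)))).2 ?_ ha
    rintro _ ⟨i, rfl⟩
    simp [ht]

lemma lift_xiA {x t : ℕ → B} (ht : ∀ i, t i ^ 2 = 0) (hx : x 0 = 1) (n : ℕ) :
    lift x t ht (xiA n) = x n := by
  cases n with
  | zero => simp [xiA, hx]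
  | succ n => exact aeval_X _ (Sum.inl n)

lemma lift_tauA {x t : ℕ → B} (ht : ∀ i, t i ^ 2 = 0) (n : ℕ) : lift x t ht (tauA n) = t n :=
  aeval_X _ (Sum.inr n)

noncomputable def counit : MotDualSt →ₐ[ZMod 2] ZMod 2 :=
  lift (Pi.single 0 1) (fun _ => 0) fun _ => by simp

lemma isCounitA_counit : IsCounitA counit :=
  ⟨fun n => lift_xiA _ (by simp) (n + 1), lift_tauA _⟩

noncomputable def comul : MotDualSt →ₐ[ZMod 2] MotDualSt ⊗[ZMod 2] MotDualSt :=
  lift (seriesComp 2 (fun i => xiA i ⊗ₜ[ZMod 2] 1) (fun i => 1 ⊗ₜ xiA i))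
    (fun n => tauA n ⊗ₜ[ZMod 2] 1 +
      seriesComp 2 (fun i => xiA i ⊗ₜ[ZMod 2] 1) (fun i => 1 ⊗ₜ tauA i) n)
    (milnorComul_tau_sq tauA_sq)

lemma isComulA_iff_isMilnorComul {D : MotDualSt →ₐ[ZMod 2] MotDualSt ⊗[ZMod 2] MotDualSt} :
    IsComulA D ↔ IsMilnorComul xiA tauA D := by
  simp only [IsComulA, IsMilnorComul, seriesComp_tmul]
  refine ⟨fun ⟨hxi, htau⟩ => ⟨?_, htau⟩, fun ⟨hxi, htau⟩ => ⟨fun n => hxi (n + 1), htau⟩⟩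
  rintro (_ | n)
  · simpa [xiA] using Algebra.TensorProduct.one_def
  · exact hxi n

lemma isComulA_comul : IsComulA comul :=
  isComulA_iff_isMilnorComul.2
    ⟨lift_xiA _ (by simp [seriesComp, xiA, Algebra.TensorProduct.one_def]), lift_tauA _⟩

noncomputable def antipode : MotDualSt →ₐ[ZMod 2] MotDualSt :=
  lift (seriesInv 2 xiA) (seriesComp 2 (seriesInv 2 xiA) tauA) (seriesComp_pow_eq_zero tauA_sq)

lemma antipode_xiA (n : ℕ) : antipode (xiA n) = seriesInv 2 xiA n :=
  lift_xiA _ (seriesInv_zero xiA) n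

lemma antipode_tauA (n : ℕ) : antipode (tauA n) = seriesComp 2 (seriesInv 2 xiA) tauA n :=
  lift_tauA _ n

end MotDualSt

section HopfStructure

open MotDualSt Algebra.TensorProduct

lemma IsCounitA.apply_xiA {e : MotDualSt →ₐ[ZMod 2] ZMod 2} (he : IsCounitA e) (n : ℕ) :
    e (xiA n) = (Pi.single 0 1 : ℕ → ZMod 2) n := by
  cases n with
  | zero => exact e.map_one
  | succ n => simp [he.1 n]

lemma IsCounitA.eq_counit {e : MotDualSt →ₐ[ZMod 2] ZMod 2} (he : IsCounitA e) : e = counit :=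
  algHom_ext (fun n => by rw [he.1, isCounitA_counit.1]) fun n => by rw [he.2, isCounitA_counit.2]

namespace IsComulA

variable {D : MotDualSt →ₐ[ZMod 2] MotDualSt ⊗[ZMod 2] MotDualSt} (hD : IsComulA D)
  {e : MotDualSt →ₐ[ZMod 2] ZMod 2}
include hD

lemma eq_comul : D = comul :=
  algHom_ext (fun n => by rw [hD.1, isComulA_comul.1]) fun n => by rw [hD.2, isComulA_comul.2]

lemma coassoc :
    (Algebra.TensorProduct.assoc (ZMod 2) (ZMod 2) (ZMod 2) MotDualSt MotDualSt
        MotDualSt).toAlgHom.comp ((map D (AlgHom.id (ZMod 2) MotDualSt)).comp D) =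
      (map (AlgHom.id (ZMod 2) MotDualSt) D).comp D :=
  have hM := isComulA_iff_isMilnorComul.1 hD
  algHom_ext (fun n => hM.coassoc_apply_xi (n + 1)) hM.coassoc_apply_tau

lemma lid_comp_map_counit (he : IsCounitA e) :
    (Algebra.TensorProduct.lid (ZMod 2) MotDualSt).toAlgHom.comp
        ((map e (AlgHom.id (ZMod 2) MotDualSt)).comp D) = AlgHom.id (ZMod 2) MotDualSt :=
  have hM := isComulA_iff_isMilnorComul.1 hD
  algHom_ext (fun n => hM.lid_apply_xi he.apply_xiA (n + 1)) (hM.lid_apply_tau he.apply_xiA he.2)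

lemma rid_comp_map_counit (he : IsCounitA e) :
    (Algebra.TensorProduct.rid (ZMod 2) (ZMod 2) MotDualSt).toAlgHom.comp
        ((map (AlgHom.id (ZMod 2) MotDualSt) e).comp D) = AlgHom.id (ZMod 2) MotDualSt :=
  have hM := isComulA_iff_isMilnorComul.1 hD
  algHom_ext (fun n => hM.rid_apply_xi he.apply_xiA (n + 1)) (hM.rid_apply_tau he.2)

lemma mul_antipode_left (he : IsCounitA e) :
    (LinearMap.mul' (ZMod 2) MotDualSt).comp
        ((TensorProduct.map antipode.toLinearMap LinearMap.id).comp D.toLinearMap) =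
      (Algebra.linearMap (ZMod 2) MotDualSt).comp e.toLinearMap := by
  have hM := isComulA_iff_isMilnorComul.1 hD
  have h : (productMap antipode (AlgHom.id (ZMod 2) MotDualSt)).comp D =
      (Algebra.ofId (ZMod 2) MotDualSt).comp e :=
    algHom_ext
      (fun n => (hM.productMap_left_apply_xi rfl antipode_xiA (n + 1)).trans (by simp [he.1 n]))
      fun n => (hM.productMap_left_apply_tau antipode_xiA antipode_tauA n).trans (by simp [he.2 n])
  have := congrArg AlgHom.toLinearMap h
  rwa [AlgHom.comp_toLinearMap, productMap_toLinearMap, AlgHom.comp_toLinearMap] at this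

lemma mul_antipode_right (he : IsCounitA e) :
    (LinearMap.mul' (ZMod 2) MotDualSt).comp
        ((TensorProduct.map LinearMap.id antipode.toLinearMap).comp D.toLinearMap) =
      (Algebra.linearMap (ZMod 2) MotDualSt).comp e.toLinearMap := by
  have hM := isComulA_iff_isMilnorComul.1 hD
  have h : (productMap (AlgHom.id (ZMod 2) MotDualSt) antipode).comp D =
      (Algebra.ofId (ZMod 2) MotDualSt).comp e :=
    algHom_ext
      (fun n => (hM.productMap_right_apply_xi rfl antipode_xiA (n + 1)).trans (by simp [he.1 n]))
      fun n => (hM.productMap_right_apply_tau rfl antipode_tauA n).trans (by simp [he.2 n])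
  have := congrArg AlgHom.toLinearMap h
  rwa [AlgHom.comp_toLinearMap, productMap_toLinearMap, AlgHom.comp_toLinearMap] at this

end IsComulA

end HopfStructure

/-- The Cτ-linear dual Steenrod algebra `A = F2[ξ,τ]/(τ²)` is a Hopf algebra: the
comultiplication `Δ` and counit `ε` exist uniquely as algebra maps with the stated
values on the generators, `Δ` is coassociative with counit `ε` (so `(A, Δ, ε)` is a
commutative bialgebra), and there is an antipode. -/
theorem motivic_dualSteenrod_hopf :
    (∃! D : MotDualSt →ₐ[ZMod 2] MotDualSt ⊗[ZMod 2] MotDualSt, IsComulA D) ∧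
    (∃! e : MotDualSt →ₐ[ZMod 2] ZMod 2, IsCounitA e) ∧
    (∀ (D : MotDualSt →ₐ[ZMod 2] MotDualSt ⊗[ZMod 2] MotDualSt)
        (e : MotDualSt →ₐ[ZMod 2] ZMod 2),
      IsComulA D → IsCounitA e →
      -- coassociativity
      ((Algebra.TensorProduct.assoc (ZMod 2) (ZMod 2) (ZMod 2) MotDualSt MotDualSt MotDualSt).toAlgHom.comp
          ((Algebra.TensorProduct.map D (AlgHom.id (ZMod 2) MotDualSt)).comp D) =
        (Algebra.TensorProduct.map (AlgHom.id (ZMod 2) MotDualSt) D).comp D) ∧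
      -- left and right counit laws
      ((Algebra.TensorProduct.lid (ZMod 2) MotDualSt).toAlgHom.comp
          ((Algebra.TensorProduct.map e (AlgHom.id (ZMod 2) MotDualSt)).comp D) =
        AlgHom.id (ZMod 2) MotDualSt) ∧
      ((Algebra.TensorProduct.rid (ZMod 2) (ZMod 2) MotDualSt).toAlgHom.comp
          ((Algebra.TensorProduct.map (AlgHom.id (ZMod 2) MotDualSt) e).comp D) =
        AlgHom.id (ZMod 2) MotDualSt) ∧
      -- existence of an antipode
      (∃ S : MotDualSt →ₗ[ZMod 2] MotDualSt,
        (LinearMap.mul' (ZMod 2) MotDualSt).comp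
            ((TensorProduct.map S LinearMap.id).comp D.toLinearMap) =
          (Algebra.linearMap (ZMod 2) MotDualSt).comp e.toLinearMap ∧
        (LinearMap.mul' (ZMod 2) MotDualSt).comp
            ((TensorProduct.map LinearMap.id S).comp D.toLinearMap) =
          (Algebra.linearMap (ZMod 2) MotDualSt).comp e.toLinearMap)) := by
  refine ⟨⟨MotDualSt.comul, MotDualSt.isComulA_comul, fun _ hD => hD.eq_comul⟩,
    ⟨MotDualSt.counit, MotDualSt.isCounitA_counit, fun _ he => he.eq_counit⟩,
    fun D e hD he => ?_⟩
  exact ⟨hD.coassoc, hD.lid_comp_map_counit he, hD.rid_comp_map_counit he,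
    MotDualSt.antipode.toLinearMap, hD.mul_antipode_left he, hD.mul_antipode_right he⟩
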